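/- arXiv:2507.19920 — 3 statements merged into one kernel-verified Lean document; each statement's English description precedes it below -/
import Mathlib

section
/- Let Δ̃ be an n×n Hermitian matrix. The function ρ ↦ Tr(ρ log ρ) − Tr(ρ Δ̃) over positive semi-definite n×n matrices ρ attains its unique minimum at ρ = exp(Δ̃ − I_n), where exp is the matrix exponential and I_n is the identity matrix. -/
open Matrix Kronecker
open scoped ComplexOrder

/-- Matrix logarithm of a Hermitian matrix via its spectral decomposition,
with the convention `Real.log 0 = 0` off the support. -/
noncomputable def matLog {n : Type*} [Fintype n] [DecidableEq n] {A : Matrix n n ℂ}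
    (hA : A.IsHermitian) : Matrix n n ℂ :=
  (hA.eigenvectorUnitary : Matrix n n ℂ) *
    Matrix.diagonal (fun i => (Real.log (hA.eigenvalues i) : ℂ)) *
    star (hA.eigenvectorUnitary : Matrix n n ℂ)

/-- `Tr(A log A)` for a Hermitian matrix `A`, i.e. `∑ λᵢ log λᵢ` with `0 log 0 = 0`. -/
noncomputable def entSum {n : Type*} [Fintype n] [DecidableEq n] {A : Matrix n n ℂ}
    (hA : A.IsHermitian) : ℝ :=
  ∑ i, hA.eigenvalues i * Real.log (hA.eigenvalues i)

/-- Quantum relative entropy `S(ρ‖σ) = Tr(ρ log ρ) − Tr(ρ log σ)`. -/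
noncomputable def qRelEnt {n : Type*} [Fintype n] [DecidableEq n] {ρ σ : Matrix n n ℂ}
    (hρ : ρ.IsHermitian) (hσ : σ.IsHermitian) : ℝ :=
  entSum hρ - (Matrix.trace (ρ * matLog hσ)).re

/-- The objective `ρ ↦ Tr(ρ log ρ) − Tr(ρ Δ̃)`. -/
noncomputable def obj {n : Type*} [Fintype n] [DecidableEq n] (Δ : Matrix n n ℂ)
    {ρ : Matrix n n ℂ} (hρ : ρ.IsHermitian) : ℝ :=
  entSum hρ - (Matrix.trace (ρ * Δ)).re

/-- Partial trace over the first tensor factor. -/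
noncomputable def ptrace1 {n m : Type*} [Fintype n] (C : Matrix (n × m) (n × m) ℂ) :
    Matrix m m ℂ :=
  Matrix.of fun k l => ∑ i, C (i, k) (i, l)

/-- Partial trace over the second tensor factor. -/
noncomputable def ptrace2 {n m : Type*} [Fintype m] (C : Matrix (n × m) (n × m) ℂ) :
    Matrix n n ℂ :=
  Matrix.of fun i j => ∑ k, C (i, k) (j, k)

/-! Write `ρ = ∑ aᵢ uᵢuᵢ*` and `σ = exp (Δ̃ - 1) = ∑ bⱼ wⱼwⱼ*` with `bⱼ > 0`. Then `log σ = Δ̃ - 1`,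
so `obj ρ - obj σ = S(ρ‖σ) - Tr ρ + Tr σ`. Expanding all traces in the two eigenbases, with the
doubly stochastic overlap matrix `Pᵢⱼ = |⟨uᵢ, wⱼ⟩|²`, turns this into
`∑ᵢⱼ Pᵢⱼ bⱼ klFun (aᵢ / bⱼ) ≥ 0` (Klein's inequality). Equality forces `aᵢ = bⱼ` whenever
`⟨uᵢ, wⱼ⟩ ≠ 0`, which says exactly that `ρ` and `σ` coincide. -/

open InformationTheory

lemma InformationTheory.mul_klFun_div (a : ℝ) {b : ℝ} (hb : b ≠ 0) :
    b * klFun (a / b) = a * Real.log a - a * Real.log b - a + b := by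
  rcases eq_or_ne a 0 with rfl | ha
  · simp [klFun_apply]
  · rw [klFun_apply, Real.log_div ha hb]
    field_simp
    ring

namespace Matrix

variable {n : Type*} [Fintype n] [DecidableEq n]

theorem norm_sq_entries_mem_doublyStochastic {𝕜 : Type*} [RCLike 𝕜] {U : Matrix n n 𝕜}
    (hU : U ∈ unitaryGroup n 𝕜) : (of fun i j => ‖U i j‖ ^ 2) ∈ doublyStochastic ℝ n := by
  have hsum {V : Matrix n n 𝕜} (hV : V * star V = 1) (i : n) : ∑ j, ‖V i j‖ ^ 2 = 1 := by
    have h : ∑ j, ((‖V i j‖ ^ 2 : ℝ) : 𝕜) = 1 := by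
      simpa [mul_apply, RCLike.mul_conj] using congr_fun (congr_fun hV i) i
    exact_mod_cast h
  refine mem_doublyStochastic_iff_sum.mpr ⟨fun i j => sq_nonneg _, hsum hU.2, fun j => ?_⟩
  simpa using hsum (V := Uᴴ)
    (by rw [star_eq_conjTranspose, conjTranspose_conjTranspose]; exact hU.1) j

theorem sum_add_sum_eq_sum_sum_of_mem_doublyStochastic {P : Matrix n n ℝ}
    (hP : P ∈ doublyStochastic ℝ n) (f g : n → ℝ) :
    ∑ i, f i + ∑ j, g j = ∑ i, ∑ j, P i j * (f i + g j) := by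
  simp only [mul_add, Finset.sum_add_distrib, ← Finset.sum_mul, sum_row_of_mem_doublyStochastic hP,
    one_mul]
  rw [Finset.sum_comm]
  simp only [← Finset.sum_mul, sum_col_of_mem_doublyStochastic hP, one_mul]

theorem re_trace_diagonal_mul_mul_diagonal_mul_star (M : Matrix n n ℂ) (a b : n → ℝ) :
    (trace (diagonal (fun i => (a i : ℂ)) * M * diagonal (fun j => (b j : ℂ)) * star M)).re
      = ∑ i, ∑ j, a i * b j * ‖M i j‖ ^ 2 := by
  rw [trace, Complex.re_sum]
  refine Finset.sum_congr rfl fun i _ => ?_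
  rw [diag_apply, mul_apply, Complex.re_sum]
  refine Finset.sum_congr rfl fun j _ => ?_
  have hnorm : M i j * star (M i j) = ((‖M i j‖ ^ 2 : ℝ) : ℂ) := by
    rw [Complex.star_def, Complex.mul_conj', Complex.ofReal_pow]
  rw [mul_diagonal, diagonal_mul, star_apply,
    show (a i : ℂ) * M i j * (b j : ℂ) * star (M i j)
      = ((a i * b j : ℝ) : ℂ) * (M i j * star (M i j))
      by push_cast; ring, hnorm, ← Complex.ofReal_mul, Complex.ofReal_re]

theorem re_trace_conj_diagonal_mul_conj_diagonal (U W : Matrix n n ℂ) (a b : n → ℝ) :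
    (trace (U * diagonal (fun i => (a i : ℂ)) * star U *
      (W * diagonal (fun j => (b j : ℂ)) * star W))).re
      = ∑ i, ∑ j, a i * b j * ‖(star U * W) i j‖ ^ 2 := by
  rw [← re_trace_diagonal_mul_mul_diagonal_mul_star, star_mul, star_star]
  simp only [Matrix.mul_assoc]
  rw [trace_mul_comm U]
  simp only [Matrix.mul_assoc]

theorem conj_diagonal_eq_of_mul_sub_eq_zero {U W : Matrix n n ℂ} (hU : U ∈ unitaryGroup n ℂ)
    (hW : W ∈ unitaryGroup n ℂ) {a b : n → ℂ} (h : ∀ i j, (star U * W) i j * (a i - b j) = 0) :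
    U * diagonal a * star U = W * diagonal b * star W := by
  have hcomm : diagonal a * (star U * W) = star U * W * diagonal b := by
    ext i j
    rw [diagonal_mul, mul_diagonal]
    linear_combination h i j
  calc U * diagonal a * star U = U * (diagonal a * (star U * W)) * star W := by
        simp only [Matrix.mul_assoc, hW.2, Matrix.mul_one]
    _ = U * star U * W * diagonal b * star W := by
        rw [hcomm]; simp only [Matrix.mul_assoc]
    _ = W * diagonal b * star W := by rw [hU.2, Matrix.one_mul]

namespace IsHermitian

variable {A B : Matrix n n ℂ}

theorem eq_conj_diagonal (hA : A.IsHermitian) :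
    A = (hA.eigenvectorUnitary : Matrix n n ℂ) * diagonal (fun i => (hA.eigenvalues i : ℂ)) *
      star (hA.eigenvectorUnitary : Matrix n n ℂ) := by
  conv_lhs => rw [hA.spectral_theorem, Unitary.conjStarAlgAut_apply]
  rfl

theorem re_trace_eq_sum_eigenvalues (hA : A.IsHermitian) :
    (trace A).re = ∑ i, hA.eigenvalues i := by
  simp [hA.trace_eq_sum_eigenvalues]

noncomputable def eigenOverlap (hA : A.IsHermitian) (hB : B.IsHermitian) : Matrix n n ℝ :=
  of fun i j => ‖(star (hA.eigenvectorUnitary : Matrix n n ℂ) * hB.eigenvectorUnitary) i j‖ ^ 2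

theorem eigenOverlap_mem_doublyStochastic (hA : A.IsHermitian) (hB : B.IsHermitian) :
    hA.eigenOverlap hB ∈ doublyStochastic ℝ n :=
  norm_sq_entries_mem_doublyStochastic (star hA.eigenvectorUnitary * hB.eigenvectorUnitary).2

theorem eigenOverlap_self (hA : A.IsHermitian) : hA.eigenOverlap hA = 1 := by
  ext i j
  simp [eigenOverlap, one_apply, apply_ite]

theorem re_trace_mul_matLog (hA : A.IsHermitian) (hB : B.IsHermitian) :
    (trace (A * matLog hB)).re
      = ∑ i, ∑ j, hA.eigenvalues i * Real.log (hB.eigenvalues j) * hA.eigenOverlap hB i j := by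
  conv_lhs => rw [hA.eq_conj_diagonal]
  exact re_trace_conj_diagonal_mul_conj_diagonal _ _ _ _

theorem entSum_eq_re_trace_mul_matLog (hA : A.IsHermitian) :
    entSum hA = (trace (A * matLog hA)).re := by
  rw [hA.re_trace_mul_matLog, eigenOverlap_self, entSum]
  simp [one_apply]

end IsHermitian

end Matrix

section

variable {n : Type*} [Fintype n] [DecidableEq n]

theorem qRelEnt_self {A : Matrix n n ℂ} (hA : A.IsHermitian) : qRelEnt hA hA = 0 := by
  rw [qRelEnt, hA.entSum_eq_re_trace_mul_matLog, sub_self]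

theorem qRelEnt_sub_re_trace_add_re_trace {ρ σ : Matrix n n ℂ} (hρ : ρ.IsHermitian)
    (hσ : σ.IsHermitian) :
    qRelEnt hρ hσ - (trace ρ).re + (trace σ).re
      = ∑ i, ∑ j, hρ.eigenOverlap hσ i j * (hρ.eigenvalues i * Real.log (hρ.eigenvalues i)
          - hρ.eigenvalues i * Real.log (hσ.eigenvalues j) - hρ.eigenvalues i
          + hσ.eigenvalues j) := by
  have hsplit := sum_add_sum_eq_sum_sum_of_mem_doublyStochastic
    (hρ.eigenOverlap_mem_doublyStochastic hσ)
    (fun i => hρ.eigenvalues i * Real.log (hρ.eigenvalues i) - hρ.eigenvalues i) hσ.eigenvalues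
  rw [qRelEnt, entSum, hρ.re_trace_mul_matLog, hρ.re_trace_eq_sum_eigenvalues,
    hσ.re_trace_eq_sum_eigenvalues]
  calc _ = (∑ i, (hρ.eigenvalues i * Real.log (hρ.eigenvalues i) - hρ.eigenvalues i)
        + ∑ j, hσ.eigenvalues j) - ∑ i, ∑ j, hρ.eigenvalues i * Real.log (hσ.eigenvalues j)
          * hρ.eigenOverlap hσ i j := by
        rw [Finset.sum_sub_distrib]; ring
    _ = _ := by
      rw [hsplit, ← Finset.sum_sub_distrib]
      refine Finset.sum_congr rfl fun i _ => ?_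
      rw [← Finset.sum_sub_distrib]
      exact Finset.sum_congr rfl fun j _ => by ring

theorem qRelEnt_sub_re_trace_add_re_trace_eq_sum_klFun {ρ σ : Matrix n n ℂ} (hρ : ρ.IsHermitian)
    (hσ : σ.PosDef) :
    qRelEnt hρ hσ.1 - (trace ρ).re + (trace σ).re
      = ∑ i, ∑ j, hρ.eigenOverlap hσ.1 i j *
          (hσ.1.eigenvalues j * klFun (hρ.eigenvalues i / hσ.1.eigenvalues j)) := by
  simp only [qRelEnt_sub_re_trace_add_re_trace, mul_klFun_div _ (hσ.eigenvalues_pos _).ne']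

theorem eigenOverlap_mul_mul_klFun_nonneg {ρ σ : Matrix n n ℂ} (hρ : ρ.PosSemidef)
    (hσ : σ.PosDef) (i j : n) :
    0 ≤ hρ.1.eigenOverlap hσ.1 i j *
      (hσ.1.eigenvalues j * klFun (hρ.1.eigenvalues i / hσ.1.eigenvalues j)) :=
  mul_nonneg (nonneg_of_mem_doublyStochastic (hρ.1.eigenOverlap_mem_doublyStochastic hσ.1))
    (mul_nonneg (hσ.eigenvalues_pos j).le
      (klFun_nonneg (div_nonneg (hρ.eigenvalues_nonneg i) (hσ.eigenvalues_pos j).le)))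

theorem re_trace_sub_re_trace_le_qRelEnt {ρ σ : Matrix n n ℂ} (hρ : ρ.PosSemidef)
    (hσ : σ.PosDef) : (trace ρ).re - (trace σ).re ≤ qRelEnt hρ.1 hσ.1 := by
  have hsum := qRelEnt_sub_re_trace_add_re_trace_eq_sum_klFun hρ.1 hσ
  have hnonneg := Finset.sum_nonneg fun i (_ : i ∈ Finset.univ) =>
    Finset.sum_nonneg fun j (_ : j ∈ Finset.univ) => eigenOverlap_mul_mul_klFun_nonneg hρ hσ i j
  linarith

theorem eq_of_qRelEnt_eq_re_trace_sub_re_trace {ρ σ : Matrix n n ℂ} (hρ : ρ.PosSemidef)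
    (hσ : σ.PosDef) (h : qRelEnt hρ.1 hσ.1 = (trace ρ).re - (trace σ).re) : ρ = σ := by
  have hsum : ∑ i, ∑ j, hρ.1.eigenOverlap hσ.1 i j *
      (hσ.1.eigenvalues j * klFun (hρ.1.eigenvalues i / hσ.1.eigenvalues j)) = 0 := by
    rw [← qRelEnt_sub_re_trace_add_re_trace_eq_sum_klFun hρ.1 hσ]; linarith
  have hzero i j : hρ.1.eigenOverlap hσ.1 i j *
      (hσ.1.eigenvalues j * klFun (hρ.1.eigenvalues i / hσ.1.eigenvalues j)) = 0 := by
    rw [Finset.sum_eq_zero_iff_of_nonneg fun i _ => Finset.sum_nonneg fun j _ =>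
      eigenOverlap_mul_mul_klFun_nonneg hρ hσ i j] at hsum
    exact (Finset.sum_eq_zero_iff_of_nonneg fun j _ =>
      eigenOverlap_mul_mul_klFun_nonneg hρ hσ i j).mp
      (hsum i (Finset.mem_univ i)) j (Finset.mem_univ j)
  rw [hρ.1.eq_conj_diagonal, hσ.1.eq_conj_diagonal]
  refine conj_diagonal_eq_of_mul_sub_eq_zero hρ.1.eigenvectorUnitary.2 hσ.1.eigenvectorUnitary.2
    fun i j => ?_
  have hb := hσ.eigenvalues_pos j
  rcases mul_eq_zero.mp (hzero i j) with hP | hkl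
  · rw [IsHermitian.eigenOverlap, of_apply, sq_eq_zero_iff, norm_eq_zero] at hP
    rw [hP, zero_mul]
  · rw [mul_eq_zero, klFun_eq_zero_iff (div_nonneg (hρ.eigenvalues_nonneg i) hb.le),
      div_eq_one_iff_eq hb.ne'] at hkl
    rcases hkl with hb0 | hab
    · exact (hb.ne' hb0).elim
    · rw [hab, sub_self, mul_zero]

theorem obj_eq_qRelEnt_sub_re_trace (Δ : Matrix n n ℂ) {ρ σ : Matrix n n ℂ} (hρ : ρ.IsHermitian)
    (hσ : σ.IsHermitian) (hlog : matLog hσ = Δ - 1) :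
    obj Δ hρ = qRelEnt hρ hσ - (trace ρ).re := by
  rw [obj, qRelEnt, hlog, Matrix.mul_sub, Matrix.mul_one, trace_sub, Complex.sub_re]
  ring

theorem matLog_eq_cfc {A : Matrix n n ℂ} (hA : A.IsHermitian) : matLog hA = cfc Real.log A := by
  rw [hA.cfc_eq, IsHermitian.cfc, Unitary.conjStarAlgAut_apply, matLog]
  rfl

section Exp

open scoped Matrix.Norms.L2Operator MatrixOrder

theorem Matrix.IsHermitian.posDef_exp {X : Matrix n n ℂ} (hX : X.IsHermitian) :
    (NormedSpace.exp X).PosDef := by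
  rw [← isStrictlyPositive_iff_posDef, ← CFC.real_exp_eq_normedSpace_exp hX.isSelfAdjoint,
    cfc_isStrictlyPositive_iff Real.exp X]
  exact fun x _ => Real.exp_pos x

theorem matLog_exp {X : Matrix n n ℂ} (hX : X.IsHermitian) (h : (NormedSpace.exp X).IsHermitian) :
    matLog h = X := by
  rw [matLog_eq_cfc]
  exact CFC.log_exp X hX.isSelfAdjoint

end Exp

end

/-- `ρ ↦ Tr(ρ log ρ) − Tr(ρ Δ̃)` over PSD matrices attains its unique
minimum at `ρ = exp(Δ̃ − I)`. -/
theorem stmt0 {n : Type*} [Fintype n] [DecidableEq n]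
    (Δ : Matrix n n ℂ) (hΔ : Δ.IsHermitian) :
    ∃ hexp : (NormedSpace.exp (Δ - 1)).IsHermitian,
      (NormedSpace.exp (Δ - 1)).PosSemidef ∧
      ∀ (ρ : Matrix n n ℂ) (hρ : ρ.PosSemidef),
        obj Δ hexp ≤ obj Δ hρ.1 ∧
        (obj Δ hρ.1 = obj Δ hexp → ρ = NormedSpace.exp (Δ - 1)) := by
  have hX : (Δ - 1).IsHermitian := hΔ.sub isHermitian_one
  have hσ := hX.posDef_exp
  have hlog := matLog_exp hX hσ.1
  have hobjσ : obj Δ hσ.1 = -(trace (NormedSpace.exp (Δ - 1))).re := by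
    rw [obj_eq_qRelEnt_sub_re_trace Δ hσ.1 hσ.1 hlog, qRelEnt_self, zero_sub]
  refine ⟨hσ.1, hσ.posSemidef, fun ρ hρ => ?_⟩
  have hobjρ := obj_eq_qRelEnt_sub_re_trace Δ hρ.1 hσ.1 hlog
  refine ⟨by linarith [re_trace_sub_re_trace_le_qRelEnt hρ hσ], fun h => ?_⟩
  exact eq_of_qRelEnt_eq_re_trace_sub_re_trace hρ hσ (by linarith)
end

section
/- Let Δ̃ be an n×n Hermitian matrix. The minimum value of Tr(ρ log ρ) − Tr(ρ Δ̃) over positive semi-definite n×n matrices ρ equals −(1/e) · Tr(exp(Δ̃)). -/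
open Matrix Kronecker
open scoped ComplexOrder

/-!
Diagonalise `Δ = U diag(d) U⋆` and, for `ρ ⪰ 0`, let `q` be the diagonal of `U⋆ ρ U`. Then
`Tr(ρ Δ) = ∑ qⱼ dⱼ`, and `Tr(ρ log ρ) ≥ ∑ qⱼ log qⱼ`: `q` is the image of the spectrum of `ρ`
under the doubly stochastic matrix `|(U⋆V)ⱼᵢ|²` (`V` diagonalising `ρ`), and `x log x` is convex.
Termwise `q log q - q d ≥ -exp (d - 1)` (tangent line of `exp` at `log q`), with equality at
`q = exp (d - 1)`, i.e. at the Gibbs state `ρ = exp (Δ - 1)`.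
-/

theorem Real.neg_exp_sub_one_le_mul_log_sub_mul {q : ℝ} (hq : 0 ≤ q) (d : ℝ) :
    -Real.exp (d - 1) ≤ q * Real.log q - q * d := by
  rcases hq.eq_or_lt with rfl | hq
  · simpa using (Real.exp_pos (d - 1)).le
  have htangent := mul_le_mul_of_nonneg_left (Real.add_one_le_exp (d - 1 - Real.log q)) hq.le
  have hexp : q * Real.exp (d - 1 - Real.log q) = Real.exp (d - 1) := by
    rw [Real.exp_sub, Real.exp_log hq, mul_div_cancel₀ _ hq.ne']
  linarith

section

variable {n : Type*} [Fintype n] [DecidableEq n]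

theorem ConvexOn.sum_map_mulVec_le_of_mem_doublyStochastic {𝕜 : Type*} [Field 𝕜]
    [LinearOrder 𝕜] [IsStrictOrderedRing 𝕜] {s : Set 𝕜} {f : 𝕜 → 𝕜} (hf : ConvexOn 𝕜 s f)
    {P : Matrix n n 𝕜} (hP : P ∈ doublyStochastic 𝕜 n) {x : n → 𝕜} (hx : ∀ i, x i ∈ s) :
    ∑ j, f ((P *ᵥ x) j) ≤ ∑ i, f (x i) := by
  obtain ⟨hnonneg, hrow, -⟩ := mem_doublyStochastic_iff_sum.mp hP
  calc ∑ j, f ((P *ᵥ x) j)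
      ≤ ∑ j, (P *ᵥ (f ∘ x)) j := Finset.sum_le_sum fun j _ => by
        simpa [mulVec, dotProduct] using
          hf.map_sum_le (t := Finset.univ) (fun i _ => hnonneg j i) (hrow j) (fun i _ => hx i)
    _ = ∑ i, f (x i) := sum_mulVec_of_mem_doublyStochastic hP

namespace Matrix

theorem normSq_mem_doublyStochastic {U : Matrix n n ℂ} (hU : U ∈ unitaryGroup n ℂ) :
    (of fun i j => Complex.normSq (U i j)) ∈ doublyStochastic ℝ n := by
  have hrow (i : n) : ∑ j, Complex.normSq (U i j) = 1 := by
    have h := congr_fun₂ (mem_unitaryGroup_iff.mp hU) i i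
    simp only [mul_apply, star_apply, Complex.star_def, Complex.mul_conj, one_apply_eq] at h
    exact_mod_cast h
  have hcol (j : n) : ∑ i, Complex.normSq (U i j) = 1 := by
    have h := congr_fun₂ (mem_unitaryGroup_iff'.mp hU) j j
    simp only [mul_apply, star_apply, Complex.star_def, mul_comm (starRingEnd ℂ _),
      Complex.mul_conj, one_apply_eq] at h
    exact_mod_cast h
  exact mem_doublyStochastic_iff_sum.mpr
    ⟨fun i j => Complex.normSq_nonneg _, hrow, hcol⟩

theorem re_conj_diagonal_apply_self (U : Matrix n n ℂ) (x : n → ℝ) (j : n) :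
    ((U * diagonal (fun i => (x i : ℂ)) * star U) j j).re
      = ((of fun i j => Complex.normSq (U i j)) *ᵥ x) j := by
  simp only [mul_diagonal, mul_apply (M := U * _), star_apply, Complex.star_def, Complex.re_sum,
    mulVec, dotProduct, of_apply]
  refine Finset.sum_congr rfl fun i _ => ?_
  rw [mul_right_comm, Complex.mul_conj, ← Complex.ofReal_mul, Complex.ofReal_re]

theorem sum_map_re_diag_conj_diagonal_le {s : Set ℝ} {f : ℝ → ℝ} (hf : ConvexOn ℝ s f)
    {U : Matrix n n ℂ} (hU : U ∈ unitaryGroup n ℂ) {x : n → ℝ} (hx : ∀ i, x i ∈ s) :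
    ∑ j, f ((U * diagonal (fun i => (x i : ℂ)) * star U) j j).re ≤ ∑ i, f (x i) := by
  simpa only [re_conj_diagonal_apply_self] using
    hf.sum_map_mulVec_le_of_mem_doublyStochastic (normSq_mem_doublyStochastic hU) hx

omit [DecidableEq n] in
theorem star_mul_conj_mul_eq (U W D : Matrix n n ℂ) :
    star W * (U * D * star U) * W = (star W * U) * D * star (star W * U) := by
  simp only [star_mul, star_star, Matrix.mul_assoc]

omit [DecidableEq n] in
theorem trace_mul_conj (ρ U D : Matrix n n ℂ) :
    trace (ρ * (U * D * star U)) = trace ((star U * ρ * U) * D) := by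
  rw [← Matrix.mul_assoc, ← Matrix.mul_assoc, trace_mul_cycle]
  simp only [Matrix.mul_assoc]

theorem posSemidef_conj_diagonal (U : Matrix n n ℂ) {x : n → ℝ} (hx : ∀ i, 0 ≤ x i) :
    (U * diagonal (fun i => (x i : ℂ)) * star U).PosSemidef := by
  have hD : (diagonal (fun i => (x i : ℂ))).PosSemidef :=
    posSemidef_diagonal_iff.mpr fun i => Complex.zero_le_real.mpr (hx i)
  simpa only [star_eq_conjTranspose] using hD.mul_mul_conjTranspose_same U

namespace IsHermitian

variable {A : Matrix n n ℂ} (hA : A.IsHermitian)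
include hA

theorem star_eigenvectorUnitary_mul_mul_eigenvectorUnitary :
    star (hA.eigenvectorUnitary : Matrix n n ℂ) * A * hA.eigenvectorUnitary
      = diagonal (fun i => (hA.eigenvalues i : ℂ)) := by
  have h := hA.conjStarAlgAut_star_eigenvectorUnitary
  rwa [Unitary.conjStarAlgAut_star_apply] at h

theorem sum_map_re_diag_conj_le {s : Set ℝ} {f : ℝ → ℝ} (hf : ConvexOn ℝ s f)
    (hs : ∀ i, hA.eigenvalues i ∈ s) {W : Matrix n n ℂ} (hW : W ∈ unitaryGroup n ℂ) :
    ∑ j, f ((star W * A * W) j j).re ≤ ∑ i, f (hA.eigenvalues i) := by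
  have hV := hA.eigenvectorUnitary.2
  conv_lhs => rw [hA.spectral_theorem, Unitary.conjStarAlgAut_apply, star_mul_conj_mul_eq]
  exact sum_map_re_diag_conj_diagonal_le hf (mul_mem (Unitary.star_mem hW) hV) hs

theorem sum_map_eigenvalues_le {s : Set ℝ} {f : ℝ → ℝ} (hf : ConvexOn ℝ s f)
    {U : Matrix n n ℂ} (hU : U ∈ unitaryGroup n ℂ) {x : n → ℝ} (hx : ∀ i, x i ∈ s)
    (hAU : A = U * diagonal (fun i => (x i : ℂ)) * star U) :
    ∑ i, f (hA.eigenvalues i) ≤ ∑ i, f (x i) := by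
  have hV := hA.eigenvectorUnitary.2
  have hdiag : star (hA.eigenvectorUnitary : Matrix n n ℂ) * (U * diagonal (fun i => (x i : ℂ))
      * star U) * hA.eigenvectorUnitary = diagonal (fun i => (hA.eigenvalues i : ℂ)) := by
    rw [← hAU]; exact hA.star_eigenvectorUnitary_mul_mul_eigenvectorUnitary
  rw [star_mul_conj_mul_eq] at hdiag
  simpa only [hdiag, diagonal_apply_eq, Complex.ofReal_re] using
    sum_map_re_diag_conj_diagonal_le hf (mul_mem (Unitary.star_mem hV) hU) hx

theorem re_trace_exp : (trace (NormedSpace.exp A)).re = ∑ i, Real.exp (hA.eigenvalues i) := by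
  set V := hA.eigenvectorUnitary
  have hexp : NormedSpace.exp A
      = V * diagonal (fun i => (Real.exp (hA.eigenvalues i) : ℂ)) * star (V : Matrix n n ℂ) := by
    conv_lhs => rw [hA.spectral_theorem, Unitary.conjStarAlgAut_apply]
    have := Matrix.exp_units_conj (Unitary.toUnits V) (diagonal (RCLike.ofReal ∘ hA.eigenvalues))
    simp only [Unitary.val_toUnits_apply, Unitary.val_inv_toUnits_apply,
      UnitaryGroup.inv_val] at this
    refine this.trans ?_
    rw [exp_diagonal]
    congr 3
    funext i
    simp [Pi.coe_exp, ← Complex.exp_eq_exp_ℂ, Complex.ofReal_exp]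
  rw [hexp, trace_mul_cycle, Unitary.coe_star_mul_self, Matrix.one_mul, trace_diagonal,
    Complex.re_sum]
  simp only [Complex.ofReal_re]

end IsHermitian

end Matrix

open Matrix

theorem sum_neg_exp_le_obj {Δ : Matrix n n ℂ} (hΔ : Δ.IsHermitian) {ρ : Matrix n n ℂ}
    (hρ : ρ.PosSemidef) : ∑ i, -Real.exp (hΔ.eigenvalues i - 1) ≤ obj Δ hρ.1 := by
  set U : Matrix n n ℂ := ↑hΔ.eigenvectorUnitary
  set d := hΔ.eigenvalues
  set q : n → ℝ := fun j => ((star U * ρ * U) j j).re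
  have hq (j : n) : 0 ≤ q j := by
    have := (hρ.conjTranspose_mul_mul_same U).diag_nonneg (i := j)
    exact Complex.nonneg_iff.mp (by simpa only [star_eq_conjTranspose] using this) |>.1
  have htrace : (trace (ρ * Δ)).re = ∑ j, q j * d j := by
    conv_lhs => rw [hΔ.spectral_theorem, Unitary.conjStarAlgAut_apply, trace_mul_conj]
    simp only [trace, diag, mul_diagonal, Complex.re_sum, Function.comp_apply]
    exact Finset.sum_congr rfl fun j _ => Complex.re_mul_ofReal _ _
  have hent : ∑ j, q j * Real.log (q j) ≤ entSum hρ.1 :=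
    hρ.1.sum_map_re_diag_conj_le Real.convexOn_mul_log hρ.eigenvalues_nonneg
      hΔ.eigenvectorUnitary.2
  calc ∑ j, -Real.exp (d j - 1)
      ≤ ∑ j, (q j * Real.log (q j) - q j * d j) :=
        Finset.sum_le_sum fun j _ => Real.neg_exp_sub_one_le_mul_log_sub_mul (hq j) (d j)
    _ = ∑ j, q j * Real.log (q j) - ∑ j, q j * d j := Finset.sum_sub_distrib _ _
    _ ≤ obj Δ hρ.1 := by rw [obj, htrace]; linarith

theorem exists_posSemidef_obj_le {Δ : Matrix n n ℂ} (hΔ : Δ.IsHermitian) :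
    ∃ (ρ : Matrix n n ℂ) (hρ : ρ.PosSemidef),
      obj Δ hρ.1 ≤ ∑ i, -Real.exp (hΔ.eigenvalues i - 1) := by
  set U : Matrix n n ℂ := ↑hΔ.eigenvectorUnitary
  have hU : star U * U = 1 := mem_unitaryGroup_iff'.mp hΔ.eigenvectorUnitary.2
  set d := hΔ.eigenvalues
  set μ : n → ℝ := fun i => Real.exp (d i - 1)
  have hμ (i : n) : 0 ≤ μ i := (Real.exp_pos _).le
  have hρ := posSemidef_conj_diagonal U hμ
  refine ⟨_, hρ, ?_⟩
  have hent : entSum hρ.1 ≤ ∑ i, μ i * (d i - 1) := by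
    simpa only [entSum, μ, Real.log_exp] using
      hρ.1.sum_map_eigenvalues_le Real.convexOn_mul_log hΔ.eigenvectorUnitary.2
        (fun i => Set.mem_Ici.mpr (hμ i)) rfl
  have hdiag : star U * (U * diagonal (fun i => (μ i : ℂ)) * star U) * U
      = diagonal (fun i => (μ i : ℂ)) := by
    rw [← Matrix.mul_assoc, ← Matrix.mul_assoc, hU, Matrix.one_mul, Matrix.mul_assoc, hU,
      Matrix.mul_one]
  have htrace : (trace (U * diagonal (fun i => (μ i : ℂ)) * star U * Δ)).re
      = ∑ i, μ i * d i := by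
    conv_lhs => rw [hΔ.spectral_theorem, Unitary.conjStarAlgAut_apply, trace_mul_conj, hdiag,
      diagonal_mul_diagonal, trace_diagonal, Complex.re_sum]
    exact Finset.sum_congr rfl fun i _ => by simp [d]
  calc obj Δ hρ.1 ≤ ∑ i, μ i * (d i - 1) - ∑ i, μ i * d i := by rw [obj, htrace]; linarith
    _ = ∑ i, -Real.exp (d i - 1) := by
      rw [← Finset.sum_sub_distrib]
      exact Finset.sum_congr rfl fun i _ => by ring

end

/-- the minimum value of `Tr(ρ log ρ) − Tr(ρ Δ̃)` over PSD `ρ` is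
`−(1/e) Tr(exp Δ̃)`. -/
theorem stmt1 {n : Type*} [Fintype n] [DecidableEq n]
    (Δ : Matrix n n ℂ) (hΔ : Δ.IsHermitian) :
    IsLeast {x : ℝ | ∃ (ρ : Matrix n n ℂ) (hρ : ρ.PosSemidef), x = obj Δ hρ.1}
      (-(1 / Real.exp 1) * (Matrix.trace (NormedSpace.exp Δ)).re) := by
  have hvalue : -(1 / Real.exp 1) * (trace (NormedSpace.exp Δ)).re
      = ∑ i, -Real.exp (hΔ.eigenvalues i - 1) := by
    rw [hΔ.re_trace_exp, Finset.mul_sum]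
    exact Finset.sum_congr rfl fun i _ => by rw [Real.exp_sub]; ring
  obtain ⟨ρ₀, hρ₀, hle⟩ := exists_posSemidef_obj_le hΔ
  rw [hvalue]
  refine ⟨⟨ρ₀, hρ₀, le_antisymm (sum_neg_exp_le_obj hΔ hρ₀) hle⟩, ?_⟩
  rintro _ ⟨ρ, hρ, rfl⟩
  exact sum_neg_exp_le_obj hΔ hρ
end

section
/- Let A be an n×n positive definite Hermitian matrix and Δ an n×n positive semi-definite Hermitian matrix with Δ ≠ 0, and let β₀ ∈ ℝ. Then G(β) = Tr(A exp(β₀Δ) exp(−βΔ) Δ) is strictly decreasing in β on ℝ and tends to 0 as β → +∞. -/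
/-! In an eigenbasis `U` of `Δ` with eigenvalues `λᵢ ≥ 0`, the operators `exp(β₀Δ) exp(-βΔ) Δ` are
the diagonal matrices `λᵢ e^{(β₀-β)λᵢ}`, so `G(β) = ∑ᵢ wᵢ λᵢ e^{(β₀-β)λᵢ}` with weights
`wᵢ = (U* A U)ᵢᵢ > 0` by positive definiteness of `A`. Each summand is antitone in `β` and tends
to `0`, and the summands with `λᵢ > 0`, which exist since `Δ ≠ 0`, are strictly decreasing. -/

open Matrix Kronecker
open scoped ComplexOrder

open Filter Topology

theorem Real.antitone_mul_exp_sub_mul {x : ℝ} (hx : 0 ≤ x) (a : ℝ) :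
    Antitone fun β => x * exp ((a - β) * x) :=
  fun _ _ h => mul_le_mul_of_nonneg_left (exp_le_exp.2 (by nlinarith)) hx

theorem Real.strictAnti_mul_exp_sub_mul {x : ℝ} (hx : 0 < x) (a : ℝ) :
    StrictAnti fun β => x * exp ((a - β) * x) :=
  fun _ _ h => mul_lt_mul_of_pos_left (exp_lt_exp.2 (by nlinarith)) hx

theorem Real.tendsto_mul_exp_sub_mul_atTop {x : ℝ} (hx : 0 ≤ x) (a : ℝ) :
    Tendsto (fun β => x * exp ((a - β) * x)) atTop (𝓝 0) := by
  rcases hx.eq_or_lt with rfl | hx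
  · simp
  have hexponent : Tendsto (fun β => (a - β) * x) atTop atBot :=
    (tendsto_atBot_add_const_left _ a tendsto_neg_atTop_atBot).atBot_mul_const hx
  simpa using (tendsto_exp_atBot.comp hexponent).const_mul x

theorem strictAnti_sum_of_antitone {ι α M : Type*} [Fintype ι] [Preorder α] [AddCommMonoid M]
    [PartialOrder M] [IsOrderedCancelAddMonoid M] {f : ι → α → M} (hf : ∀ i, Antitone (f i))
    {i₀ : ι} (hi₀ : StrictAnti (f i₀)) : StrictAnti fun a => ∑ i, f i a :=
  fun _ _ h => Finset.sum_lt_sum (fun i _ => hf i h.le) ⟨i₀, Finset.mem_univ _, hi₀ h⟩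

namespace Matrix

variable {n 𝕜 : Type*} [Fintype n] [DecidableEq n] [RCLike 𝕜] {Δ : Matrix n n 𝕜}

theorem IsHermitian.exp_ofReal_smul (hΔ : Δ.IsHermitian) (t : ℝ) :
    NormedSpace.exp ((t : 𝕜) • Δ) = cfc (fun x => Real.exp (t * x)) Δ := by
  set U := hΔ.eigenvectorUnitary
  have hU : (U : Matrix n n 𝕜)⁻¹ = star (U : Matrix n n 𝕜) :=
    inv_eq_left_inv (Unitary.coe_star_mul_self U)
  conv_lhs => rw [hΔ.spectral_theorem]
  rw [hΔ.cfc_eq, IsHermitian.cfc, ← map_smul, Unitary.conjStarAlgAut_apply,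
    Unitary.conjStarAlgAut_apply, ← hU, exp_conj _ _ Unitary.isUnit_coe, ← diagonal_smul,
    exp_diagonal]
  congr 3
  ext i
  simp only [algebraMap_smul, Pi.coe_exp, Pi.smul_apply, Function.comp_apply,
    RCLike.real_smul_ofReal]
  rw [Real.exp_eq_exp_ℝ, ← RCLike.algebraMap_eq_ofReal, NormedSpace.algebraMap_exp_comm,
    map_mul]

theorem IsHermitian.trace_mul_cfc (hΔ : Δ.IsHermitian) (A : Matrix n n 𝕜) (f : ℝ → ℝ) :
    trace (A * cfc f Δ) = ∑ i, (star (hΔ.eigenvectorUnitary : Matrix n n 𝕜) * A *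
      hΔ.eigenvectorUnitary) i i * f (hΔ.eigenvalues i) := by
  rw [hΔ.cfc_eq, IsHermitian.cfc, Unitary.conjStarAlgAut_apply, ← mul_assoc, ← mul_assoc,
    trace_mul_cycle, ← mul_assoc]
  simp [trace, mul_diagonal]

theorem IsHermitian.trace_mul_exp_mul_exp_mul (hΔ : Δ.IsHermitian) (A : Matrix n n 𝕜)
    (s t : ℝ) :
    trace (A * NormedSpace.exp ((s : 𝕜) • Δ) * NormedSpace.exp ((t : 𝕜) • Δ) * Δ) =
      ∑ i, (star (hΔ.eigenvectorUnitary : Matrix n n 𝕜) * A * hΔ.eigenvectorUnitary) i i *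
        (hΔ.eigenvalues i * Real.exp ((s + t) * hΔ.eigenvalues i) : ℝ) := by
  have hcfc : NormedSpace.exp ((s : 𝕜) • Δ) * NormedSpace.exp ((t : 𝕜) • Δ) * Δ =
      cfc (fun x => x * Real.exp ((s + t) * x)) Δ := by
    conv_lhs => arg 2; rw [← cfc_id' ℝ Δ]
    rw [hΔ.exp_ofReal_smul, hΔ.exp_ofReal_smul, ← cfc_mul .., ← cfc_mul ..]
    congr 1
    funext x
    rw [add_mul, Real.exp_add]
    ring
  rw [mul_assoc, mul_assoc, ← mul_assoc (NormedSpace.exp _), hcfc, hΔ.trace_mul_cfc]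

theorem PosDef.star_mul_mul_unitary {A : Matrix n n 𝕜} (hA : A.PosDef) (U : unitaryGroup n 𝕜) :
    (star (U : Matrix n n 𝕜) * A * U).PosDef :=
  hA.conjTranspose_mul_mul_same (mulVec_injective_iff_isUnit.mpr Unitary.isUnit_coe)

end Matrix

/-- for positive definite `A` and nonzero PSD `Δ`,
`G(β) = Tr(A exp(β₀Δ) exp(−βΔ) Δ)` is strictly decreasing and tends to `0` as
`β → +∞`. -/
theorem stmt18 {n : Type*} [Fintype n] [DecidableEq n]
    (A Δ : Matrix n n ℂ) (hA : A.PosDef) (hΔ : Δ.PosSemidef) (hΔ0 : Δ ≠ 0) (β₀ : ℝ) :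
    StrictAnti (fun β : ℝ =>
      (Matrix.trace (A * NormedSpace.exp ((β₀ : ℂ) • Δ) *
        NormedSpace.exp ((-β : ℂ) • Δ) * Δ)).re) ∧
    Filter.Tendsto (fun β : ℝ =>
        (Matrix.trace (A * NormedSpace.exp ((β₀ : ℂ) • Δ) *
          NormedSpace.exp ((-β : ℂ) • Δ) * Δ)).re)
      Filter.atTop (nhds 0) := by
  set U := hΔ.1.eigenvectorUnitary
  set ev := hΔ.1.eigenvalues
  set w : n → ℝ := fun i => ((star (U : Matrix n n ℂ) * A * U) i i).re
  have hG : (fun β : ℝ => (trace (A * NormedSpace.exp ((β₀ : ℂ) • Δ) *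
      NormedSpace.exp ((-β : ℂ) • Δ) * Δ)).re) =
      fun β => ∑ i, w i * (ev i * Real.exp ((β₀ - β) * ev i)) := by
    funext β
    -- over `ℂ` the casts `RCLike.ofReal` of the lemma and `Complex.ofReal` agree only up to `rfl`
    have htrace := hΔ.1.trace_mul_exp_mul_exp_mul A β₀ (-β)
    simp only [RCLike.ofReal_eq_complex_ofReal] at htrace
    rw [← Complex.ofReal_neg, htrace, Complex.re_sum]
    simp_rw [Complex.re_mul_ofReal, sub_eq_add_neg]
    rfl
  have hw (i : n) : 0 < w i := (RCLike.pos_iff.mp ((hA.star_mul_mul_unitary U).diag_pos)).1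
  have hev (i : n) : 0 ≤ ev i := hΔ.eigenvalues_nonneg i
  obtain ⟨i₀, hi₀⟩ : ∃ i, ev i ≠ 0 :=
    Function.ne_iff.mp (hΔ.1.eigenvalues_eq_zero_iff.not.mpr hΔ0)
  rw [hG]
  refine ⟨strictAnti_sum_of_antitone
    (fun i => (Real.antitone_mul_exp_sub_mul (hev i) β₀).const_mul (hw i).le)
    ((Real.strictAnti_mul_exp_sub_mul ((hev i₀).lt_of_ne' hi₀) β₀).const_mul (hw i₀)), ?_⟩
  simpa using tendsto_finsetSum Finset.univ fun i _ =>
    (Real.tendsto_mul_exp_sub_mul_atTop (hev i) β₀).const_mul (w i)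
end
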